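/- Let S and A be finite nonempty sets, let p : S × A × S → ℝ satisfy p(s'|s,a) ≥ 0 and ∑_{s'} p(s'|s,a) = 1 for all (s,a), let r : S × A → ℝ, let γ ∈ [0,1), and let π₀ : S × A → ℝ satisfy π₀(a|s) > 0 and ∑_a π₀(a|s) = 1 for every s. For w > 0 let Q*_w denote the unique fixed point of the soft Bellman operator B_w[Q](s,a) = r(s,a) + γ·∑_{s'} p(s'|s,a)·w·log(∑_{a'} π₀(a'|s')·exp(Q(s',a')/w)), and let Q* denote the unique fixed point of the hard Bellman optimality operator B[Q](s,a) = r(s,a) + γ·∑_{s'} p(s'|s,a)·max_{a'} Q(s',a'). Then Q*_w converges to Q* in the sup norm as w → 0⁺; that is, for every ε > 0 there exists δ > 0 such that 0 < w < δ implies max_{(s,a)} |Q*_w(s,a) − Q*(s,a)| ≤ ε. -/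

import Mathlib

/-!
Both operators are instances of the backup `Q ↦ r + γ P V(Q)` with the value of a row being
its mellowmax, resp. its maximum. The backup is a `γ`-contraction in the sup norm on the values,
the maximum is `1`-Lipschitz, and mellowmax stays within `w · (-log c)` of the maximum, where
`c = min π₀`. Comparing the two fixed points therefore gives
`‖Q*_w - Q*‖ ≤ γ (‖Q*_w - Q*‖ + w · (-log c))`, i.e. `‖Q*_w - Q*‖ ≤ γ w (-log c) / (1 - γ)`.
-/

/-- The soft (mellowmax) Bellman operator with transition kernel `p`, reward `r`,
discount `γ`, prior `π₀` and temperature `w`. -/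
noncomputable def softBellman {S A : Type*} [Fintype S] [Fintype A] [Nonempty A]
    (p : S → A → S → ℝ) (r : S → A → ℝ) (γ : ℝ) (π₀ : S → A → ℝ) (w : ℝ)
    (Q : S → A → ℝ) : S → A → ℝ :=
  fun s a => r s a +
    γ * ∑ s', p s a s' * (w * Real.log (∑ a', π₀ s' a' * Real.exp (Q s' a' / w)))

/-- The hard Bellman optimality operator. -/
noncomputable def hardBellman {S A : Type*} [Fintype S] [Fintype A] [Nonempty A]
    (p : S → A → S → ℝ) (r : S → A → ℝ) (γ : ℝ)
    (Q : S → A → ℝ) : S → A → ℝ :=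
  fun s a => r s a +
    γ * ∑ s', p s a s' * Finset.univ.sup' Finset.univ_nonempty (fun a' => Q s' a')

open Finset Real

def bellmanBackup {S A : Type*} [Fintype S] (p : S → A → S → ℝ) (r : S → A → ℝ) (γ : ℝ)
    (V : S → ℝ) : S → A → ℝ :=
  fun s a => r s a + γ * ∑ s', p s a s' * V s'

noncomputable def mellowmax {A : Type*} [Fintype A] (π₀ : A → ℝ) (w : ℝ) (Q : A → ℝ) : ℝ :=
  w * log (∑ a, π₀ a * exp (Q a / w))

section Backup

variable {S A : Type*} [Fintype S] [Fintype A] [Nonempty A]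
  (p : S → A → S → ℝ) (r : S → A → ℝ) (γ : ℝ)

theorem softBellman_eq_bellmanBackup (π₀ : S → A → ℝ) (w : ℝ) (Q : S → A → ℝ) :
    softBellman p r γ π₀ w Q = bellmanBackup p r γ (fun s => mellowmax (π₀ s) w (Q s)) :=
  rfl

theorem hardBellman_eq_bellmanBackup (Q : S → A → ℝ) :
    hardBellman p r γ Q = bellmanBackup p r γ (fun s => univ.sup' univ_nonempty (Q s)) :=
  rfl

end Backup

theorem bellmanBackup_dist_le {S A : Type*} [Fintype S] [Fintype A]
    {p : S → A → S → ℝ} (hp_nonneg : ∀ s a s', 0 ≤ p s a s') (hp_sum : ∀ s a, ∑ s', p s a s' = 1)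
    (r : S → A → ℝ) {γ : ℝ} (hγ : 0 ≤ γ) (V V' : S → ℝ) :
    dist (bellmanBackup p r γ V) (bellmanBackup p r γ V') ≤ γ * dist V V' := by
  refine (dist_pi_le_iff (by positivity)).2 fun s => (dist_pi_le_iff (by positivity)).2 fun a => ?_
  have hsum : |∑ s', p s a s' * (V s' - V' s')| ≤ dist V V' :=
    calc |∑ s', p s a s' * (V s' - V' s')| ≤ ∑ s', p s a s' * dist V V' := by
          refine (abs_sum_le_sum_abs _ _).trans (sum_le_sum fun s' _ => ?_)
          rw [abs_mul, abs_of_nonneg (hp_nonneg s a s'), ← Real.dist_eq]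
          exact mul_le_mul_of_nonneg_left (dist_le_pi_dist V V' s') (hp_nonneg s a s')
      _ = dist V V' := by rw [← sum_mul, hp_sum, one_mul]
  calc dist (bellmanBackup p r γ V s a) (bellmanBackup p r γ V' s a)
      = γ * |∑ s', p s a s' * (V s' - V' s')| := by
        simp only [bellmanBackup, Real.dist_eq, add_sub_add_left_eq_sub, ← mul_sub,
          ← sum_sub_distrib, abs_mul, abs_of_nonneg hγ]
    _ ≤ γ * dist V V' := mul_le_mul_of_nonneg_left hsum hγ

theorem dist_sup'_le {ι : Type*} [Fintype ι] [Nonempty ι] (f g : ι → ℝ) :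
    dist (univ.sup' univ_nonempty f) (univ.sup' univ_nonempty g) ≤ dist f g := by
  have hle (f g : ι → ℝ) : univ.sup' univ_nonempty f ≤ univ.sup' univ_nonempty g + dist f g :=
    sup'_le _ _ fun i _ => by
      have := (abs_le.1 ((Real.dist_eq _ _).symm.trans_le (dist_le_pi_dist f g i))).2
      linarith [le_sup' g (mem_univ i)]
  rw [Real.dist_eq, abs_sub_le_iff]
  constructor <;> linarith [hle f g, hle g f, dist_comm f g]

section Mellowmax

variable {A : Type*} [Fintype A] {π₀ : A → ℝ} {w : ℝ}

theorem mellowmax_le_sup' [Nonempty A] (hpos : ∀ a, 0 < π₀ a) (hsum : ∑ a, π₀ a = 1)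
    (hw : 0 < w) (Q : A → ℝ) : mellowmax π₀ w Q ≤ univ.sup' univ_nonempty Q := by
  set M := univ.sup' univ_nonempty Q
  have hpos_sum : 0 < ∑ a, π₀ a * exp (Q a / w) :=
    sum_pos (fun a _ => by have := hpos a; positivity) univ_nonempty
  have hle : ∑ a, π₀ a * exp (Q a / w) ≤ exp (M / w) :=
    calc ∑ a, π₀ a * exp (Q a / w) ≤ ∑ a, π₀ a * exp (M / w) := by
          gcongr with a
          · exact (hpos a).le
          · exact le_sup' Q (mem_univ a)
      _ = exp (M / w) := by rw [← sum_mul, hsum, one_mul]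
  rw [mellowmax, ← le_div_iff₀' hw, log_le_iff_le_exp hpos_sum]
  exact hle

theorem add_mul_log_le_mellowmax (hpos : ∀ a, 0 < π₀ a) (hw : 0 < w) (Q : A → ℝ) (a : A) :
    Q a + w * log (π₀ a) ≤ mellowmax π₀ w Q := by
  have hterm : π₀ a * exp (Q a / w) ≤ ∑ a', π₀ a' * exp (Q a' / w) :=
    single_le_sum (f := fun a' => π₀ a' * exp (Q a' / w))
      (fun a' _ => by have := hpos a'; positivity) (mem_univ a)
  have hlog := log_le_log (by have := hpos a; positivity) hterm
  rw [log_mul (hpos a).ne' (exp_pos _).ne', log_exp] at hlog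
  calc Q a + w * log (π₀ a) = w * (log (π₀ a) + Q a / w) := by field_simp; ring
    _ ≤ mellowmax π₀ w Q := mul_le_mul_of_nonneg_left hlog hw.le

theorem sup'_add_mul_log_le_mellowmax [Nonempty A] (hpos : ∀ a, 0 < π₀ a) (hw : 0 < w) {c : ℝ}
    (hc0 : 0 < c) (hc : ∀ a, c ≤ π₀ a) (Q : A → ℝ) :
    univ.sup' univ_nonempty Q + w * log c ≤ mellowmax π₀ w Q := by
  obtain ⟨a, -, ha⟩ := exists_mem_eq_sup' univ_nonempty Q
  rw [ha]
  have := mul_le_mul_of_nonneg_left (log_le_log hc0 (hc a)) hw.le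
  linarith [add_mul_log_le_mellowmax hpos hw Q a]

end Mellowmax

section FixedPoints

variable {S A : Type*} [Fintype S] [Fintype A] [Nonempty A]

theorem dist_mellowmax_sup'_le {π₀ : S → A → ℝ} (hπpos : ∀ s a, 0 < π₀ s a)
    (hπsum : ∀ s, ∑ a, π₀ s a = 1) {c : ℝ} (hc0 : 0 < c) (hc1 : c ≤ 1)
    (hc : ∀ s a, c ≤ π₀ s a) {w : ℝ} (hw : 0 < w) (Q : S → A → ℝ) :
    dist (fun s => mellowmax (π₀ s) w (Q s)) (fun s => univ.sup' univ_nonempty (Q s)) ≤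
      w * -log c := by
  have hlog : 0 ≤ w * -log c := mul_nonneg hw.le (neg_nonneg.2 (log_nonpos hc0.le hc1))
  refine (dist_pi_le_iff hlog).2 fun s => ?_
  rw [Real.dist_eq, abs_le]
  constructor
  · linarith [sup'_add_mul_log_le_mellowmax (hπpos s) hw hc0 (hc s) (Q s)]
  · linarith [mellowmax_le_sup' (hπpos s) (hπsum s) hw (Q s)]

theorem dist_sup'_rows_le (Q Q' : S → A → ℝ) :
    dist (fun s => univ.sup' univ_nonempty (Q s)) (fun s => univ.sup' univ_nonempty (Q' s)) ≤
      dist Q Q' :=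
  (dist_pi_le_iff dist_nonneg).2 fun s => (dist_sup'_le (Q s) (Q' s)).trans (dist_le_pi_dist Q Q' s)

theorem dist_le_of_softBellman_hardBellman_fixedPoints {p : S → A → S → ℝ}
    (hp_nonneg : ∀ s a s', 0 ≤ p s a s') (hp_sum : ∀ s a, ∑ s', p s a s' = 1) {r : S → A → ℝ}
    {γ : ℝ} (hγ0 : 0 ≤ γ) (hγ1 : γ < 1) {π₀ : S → A → ℝ} (hπpos : ∀ s a, 0 < π₀ s a)
    (hπsum : ∀ s, ∑ a, π₀ s a = 1) {c : ℝ} (hc0 : 0 < c) (hc1 : c ≤ 1)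
    (hc : ∀ s a, c ≤ π₀ s a) {w : ℝ} (hw : 0 < w) {Q Q' : S → A → ℝ}
    (hQ : softBellman p r γ π₀ w Q = Q) (hQ' : hardBellman p r γ Q' = Q') :
    dist Q Q' ≤ γ * (w * -log c) / (1 - γ) := by
  have hrec : dist Q Q' ≤ γ * (w * -log c + dist Q Q') :=
    calc dist Q Q' = dist (softBellman p r γ π₀ w Q) (hardBellman p r γ Q') := by rw [hQ, hQ']
      _ = dist (bellmanBackup p r γ fun s => mellowmax (π₀ s) w (Q s))
            (bellmanBackup p r γ fun s => univ.sup' univ_nonempty (Q' s)) := by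
        rw [softBellman_eq_bellmanBackup, hardBellman_eq_bellmanBackup]
      _ ≤ γ * dist (fun s => mellowmax (π₀ s) w (Q s)) (fun s => univ.sup' univ_nonempty (Q' s)) :=
        bellmanBackup_dist_le hp_nonneg hp_sum r hγ0 _ _
      _ ≤ γ * (w * -log c + dist Q Q') := by
        gcongr
        exact (dist_triangle _ (fun s => univ.sup' univ_nonempty (Q s)) _).trans (add_le_add
          (dist_mellowmax_sup'_le hπpos hπsum hc0 hc1 hc hw Q) (dist_sup'_rows_le Q Q'))
  rw [le_div_iff₀ (by linarith)]
  linarith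

end FixedPoints

theorem exists_pos_le_one_forall_le {S A : Type*} [Fintype S] [Fintype A] [Nonempty S]
    [Nonempty A] {π₀ : S → A → ℝ} (hπpos : ∀ s a, 0 < π₀ s a) (hπsum : ∀ s, ∑ a, π₀ s a = 1) :
    ∃ c, 0 < c ∧ c ≤ 1 ∧ ∀ s a, c ≤ π₀ s a := by
  obtain ⟨⟨s, a⟩, -, hmin⟩ := exists_mem_eq_inf' univ_nonempty fun sa : S × A => π₀ sa.1 sa.2
  refine ⟨π₀ s a, hπpos s a, ?_, fun s' a' => hmin ▸ inf'_le _ (mem_univ (s', a'))⟩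
  calc π₀ s a ≤ ∑ a', π₀ s a' := single_le_sum (fun a' _ => (hπpos s a').le) (mem_univ a)
    _ = 1 := hπsum s

/-- The soft-optimal fixed point converges in sup norm to the optimal
fixed point of the hard Bellman operator as the temperature tends to 0 from the right. -/
theorem softFixedPoint_tendsto_hardFixedPoint
    {S A : Type*} [Fintype S] [Fintype A] [Nonempty S] [Nonempty A]
    (p : S → A → S → ℝ) (hp_nonneg : ∀ s a s', 0 ≤ p s a s')
    (hp_sum : ∀ s a, ∑ s', p s a s' = 1)
    (r : S → A → ℝ) (γ : ℝ) (hγ0 : 0 ≤ γ) (hγ1 : γ < 1)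
    (π₀ : S → A → ℝ) (hπpos : ∀ s a, 0 < π₀ s a) (hπsum : ∀ s, ∑ a, π₀ s a = 1)
    (Qw : ℝ → S → A → ℝ)
    (hQw : ∀ w : ℝ, 0 < w → softBellman p r γ π₀ w (Qw w) = Qw w)
    (Qstar : S → A → ℝ) (hQstar : hardBellman p r γ Qstar = Qstar) :
    ∀ ε > (0 : ℝ), ∃ δ > (0 : ℝ), ∀ w : ℝ, 0 < w → w < δ →
      Finset.univ.sup' Finset.univ_nonempty
        (fun sa : S × A => |Qw w sa.1 sa.2 - Qstar sa.1 sa.2|) ≤ ε := by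
  intro ε hε
  obtain ⟨c, hc0, hc1, hc⟩ := exists_pos_le_one_forall_le hπpos hπsum
  have hL : 0 ≤ -log c := neg_nonneg.2 (log_nonpos hc0.le hc1)
  have h1γ : 0 < 1 - γ := by linarith
  refine ⟨ε * (1 - γ) / (-log c + 1), by positivity, fun w hw hwδ => ?_⟩
  have hbound : γ * (w * -log c) / (1 - γ) ≤ ε := by
    rw [lt_div_iff₀ (by positivity)] at hwδ
    rw [div_le_iff₀ h1γ]
    nlinarith [mul_nonneg hw.le hL]
  have hdist := dist_le_of_softBellman_hardBellman_fixedPoints hp_nonneg hp_sum hγ0 hγ1 hπpos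
    hπsum hc0 hc1 hc hw (hQw w hw) hQstar
  refine sup'_le _ _ fun sa _ => ?_
  rw [← Real.dist_eq]
  exact ((dist_le_pi_dist _ _ sa.2).trans (dist_le_pi_dist _ _ sa.1)).trans (hdist.trans hbound)
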